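/- Let (L,·) be a loop with holomorph H(L). Then H(L) is an automorphic inverse property loop (AIPL) if and only if AUM(L) = {I} and (L,·) is an AIPL. -/

import Mathlib

/-- A loop: a set with a binary operation `*` and identity `1` such that
the equations `a * x = b` and `y * a = b` have unique solutions. -/
class Loop (L : Type*) extends Mul L, One L where
  one_mul : ∀ x : L, 1 * x = x
  mul_one : ∀ x : L, x * 1 = x
  mulLeft_exu : ∀ a b : L, ∃! x : L, a * x = b
  mulRight_exu : ∀ a b : L, ∃! y : L, y * a = b

namespace Loop

variable {L : Type*} [Loop L]

/-- The right inverse `x^ρ` of `x`, the unique solution of `x * x^ρ = 1`. -/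
noncomputable def rinv (x : L) : L := (mulLeft_exu x 1).exists.choose

/-- The left inverse `x^λ` of `x`, the unique solution of `x^λ * x = 1`. -/
noncomputable def linv (x : L) : L := (mulRight_exu x 1).exists.choose

theorem mul_rinv (x : L) : x * rinv x = 1 := (mulLeft_exu x 1).exists.choose_spec

theorem linv_mul (x : L) : linv x * x = 1 := (mulRight_exu x 1).exists.choose_spec

/-- Any automorphism of a loop fixes the identity element. -/
theorem aut_map_one (α : L ≃* L) : α 1 = 1 :=
  (mulRight_exu (α 1) (α 1)).unique
    (by rw [← map_mul, Loop.one_mul]) (Loop.one_mul _)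

end Loop

/-- An automorphic inverse property loop (AIPL): `(x·y)^ρ = x^ρ · y^ρ`. -/
def IsAIPL (L : Type*) [Loop L] : Prop :=
  ∀ x y : L, Loop.rinv (x * y) = Loop.rinv x * Loop.rinv y

/-- A cross inverse property loop (CIPL): `(x·y) · x^ρ = y`. -/
def IsCIPL (L : Type*) [Loop L] : Prop :=
  ∀ x y : L, (x * y) * Loop.rinv x = y

/-- An autotopism of a loop: a triple of bijections `(A, B, C)` with
`xA · yB = (x·y)C` for all `x, y`. -/
def IsAutotopism {L : Type*} [Loop L] (A B C : L → L) : Prop :=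
  Function.Bijective A ∧ Function.Bijective B ∧ Function.Bijective C ∧
    ∀ x y : L, A x * B y = C (x * y)

/-- The holomorph `H(L) = AUM(L) × L` of a loop `L`, with operation
`(α,x)∘(β,y) = (αβ, xβ·y)` (automorphisms act on the right, so
`αβ` is "first `α`, then `β`", i.e. `α.trans β`, and `xβ = β x`). -/
def Holomorph (L : Type*) [Loop L] : Type _ := (L ≃* L) × L

namespace Holomorph

variable {L : Type*} [Loop L]

instance : Mul (Holomorph L) := ⟨fun a b => (a.1.trans b.1, b.1 a.2 * b.2)⟩

instance : One (Holomorph L) := ⟨(MulEquiv.refl L, 1)⟩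

theorem mul_def (a b : Holomorph L) : a * b = (a.1.trans b.1, b.1 a.2 * b.2) := rfl

theorem one_def : (1 : Holomorph L) = (MulEquiv.refl L, (1 : L)) := rfl

noncomputable instance : Loop (Holomorph L) where
  one_mul a := by
    show ((MulEquiv.refl L).trans a.1, a.1 1 * a.2) = a
    have h1 : (MulEquiv.refl L).trans a.1 = a.1 := by ext t; rfl
    have h2 : a.1 (1 : L) * a.2 = a.2 := by rw [Loop.aut_map_one, Loop.one_mul]
    exact Prod.ext h1 h2
  mul_one a := by
    show (a.1.trans (MulEquiv.refl L), (MulEquiv.refl L) a.2 * 1) = a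
    have h1 : a.1.trans (MulEquiv.refl L) = a.1 := by ext t; rfl
    have h2 : (MulEquiv.refl L) a.2 * (1 : L) = a.2 := Loop.mul_one _
    exact Prod.ext h1 h2
  mulLeft_exu a b := by
    obtain ⟨y, hy, hyu⟩ := Loop.mulLeft_exu ((a.1.symm.trans b.1) a.2) b.2
    refine ⟨(a.1.symm.trans b.1, y), ?_, ?_⟩
    · show (a.1.trans (a.1.symm.trans b.1), (a.1.symm.trans b.1) a.2 * y) = b
      have h1 : a.1.trans (a.1.symm.trans b.1) = b.1 := by
        ext t; simp [MulEquiv.trans_apply]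
      exact Prod.ext h1 hy
    · intro c hc
      have h1 : a.1.trans c.1 = b.1 := congrArg Prod.fst hc
      have h2 : c.1 a.2 * c.2 = b.2 := congrArg Prod.snd hc
      have hc1 : c.1 = a.1.symm.trans b.1 := by
        ext t
        have h := congrArg (fun e : L ≃* L => e (a.1.symm t)) h1
        simpa [MulEquiv.trans_apply] using h
      have hc2 : c.2 = y := hyu c.2 (by rw [← hc1]; exact h2)
      exact Prod.ext hc1 hc2
  mulRight_exu a b := by
    obtain ⟨w, hw, hwu⟩ := Loop.mulRight_exu a.2 b.2
    refine ⟨(b.1.trans a.1.symm, a.1.symm w), ?_, ?_⟩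
    · show ((b.1.trans a.1.symm).trans a.1, a.1 (a.1.symm w) * a.2) = b
      have h1 : (b.1.trans a.1.symm).trans a.1 = b.1 := by
        ext t; simp [MulEquiv.trans_apply]
      have h2 : a.1 (a.1.symm w) * a.2 = b.2 := by
        rw [MulEquiv.apply_symm_apply]; exact hw
      exact Prod.ext h1 h2
    · intro c hc
      have h1 : c.1.trans a.1 = b.1 := congrArg Prod.fst hc
      have h2 : a.1 c.2 * a.2 = b.2 := congrArg Prod.snd hc
      have hc1 : c.1 = b.1.trans a.1.symm := by
        ext t
        have h := congrArg (fun e : L ≃* L => a.1.symm (e t)) h1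
        simpa [MulEquiv.trans_apply] using h
      have hc2 : c.2 = a.1.symm w := by
        have h := hwu (a.1 c.2) h2
        have h' := congrArg a.1.symm h
        simpa using h'
      exact Prod.ext hc1 hc2

end Holomorph

theorem Loop.rinv_eq {L : Type*} [Loop L] {x z : L} (h : x * z = 1) :
    Loop.rinv x = z :=
  (Loop.mulLeft_exu x 1).unique (Loop.mul_rinv x) h

theorem Loop.rinv_one {L : Type*} [Loop L] : Loop.rinv (1 : L) = 1 :=
  Loop.rinv_eq (Loop.one_mul 1)

theorem Loop.rinv_linv {L : Type*} [Loop L] (z : L) :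
    Loop.rinv (Loop.linv z) = z :=
  Loop.rinv_eq (Loop.linv_mul z)

theorem Holomorph.rinv_def {L : Type*} [Loop L] (a : Holomorph L) :
    Loop.rinv a = (a.1.symm, Loop.rinv (a.1.symm a.2)) := by
  apply Loop.rinv_eq
  erw [Holomorph.mul_def, Holomorph.one_def]
  refine Prod.ext ?_ ?_
  · ext t; simp
  · exact Loop.mul_rinv _

/-- `H(L)` is an AIPL iff `AUM(L) = {I}` and `L` is an AIPL. -/
theorem statement_6 {L : Type*} [Loop L] :
    IsAIPL (Holomorph L) ↔ (∀ α : L ≃* L, α = MulEquiv.refl L) ∧ IsAIPL L := by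
  constructor
  · intro h
    constructor
    · intro β
      have key : ∀ z : L, β.symm z = z := by
        intro z
        have hx := h (MulEquiv.refl L, Loop.linv z) (β, 1)
        erw [Holomorph.mul_def, Holomorph.rinv_def, Holomorph.rinv_def,
          Holomorph.rinv_def, Holomorph.mul_def] at hx
        have h2 := congrArg Prod.snd hx
        simp only [MulEquiv.trans_apply, MulEquiv.symm_trans_apply,
          MulEquiv.refl_apply, MulEquiv.refl_symm, MulEquiv.symm_apply_apply,
          Loop.mul_one] at h2
        rw [Loop.aut_map_one β.symm, Loop.rinv_one, Loop.mul_one,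
          Loop.rinv_linv] at h2
        exact h2.symm
      ext t
      have := key (β t)
      rw [MulEquiv.symm_apply_apply] at this
      rw [← this]
      rfl
    · intro x y
      have hx := h (MulEquiv.refl L, x) (MulEquiv.refl L, y)
      erw [Holomorph.mul_def, Holomorph.rinv_def, Holomorph.rinv_def,
        Holomorph.rinv_def, Holomorph.mul_def] at hx
      have h2 := congrArg Prod.snd hx
      simpa using h2
  · rintro ⟨htriv, haipl⟩ a b
    obtain ⟨α, x⟩ := a
    obtain ⟨β, y⟩ := b
    rw [htriv α, htriv β]
    erw [Holomorph.mul_def, Holomorph.rinv_def, Holomorph.rinv_def,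
      Holomorph.rinv_def, Holomorph.mul_def]
    refine Prod.ext ?_ ?_
    · ext t; rfl
    · simp only [MulEquiv.trans_apply, MulEquiv.symm_trans_apply,
        MulEquiv.refl_apply, MulEquiv.refl_symm]
      exact haipl x y
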